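/- arXiv:2011.00600 — 6 statements merged into one kernel-verified Lean document; each statement's English description precedes it below -/
import Mathlib

section
/- If s is a nonnegative integer and b_i are integers with 0 ≤ b_i < d_i for each i, then f(s·p + Σ_i a_i b_i) = f(s·p). -/
/-- Number of representations of `t` as a nonnegative integer combination of `a`. -/
noncomputable def numRep {ι : Type} [Fintype ι] (a : ι → ℕ) (t : ℕ) : ℕ :=
  Nat.card {x : ι → ℕ // ∑ i, a i * x i = t}

theorem stmt1 (n : ℕ) (a : Fin n → ℕ) (hpos : ∀ i, 0 < a i)
    (hgcd : Finset.univ.gcd a = 1)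
    (d : Fin n → ℕ) (hd : ∀ i, d i = (Finset.univ.erase i).gcd a)
    (p : ℕ) (hp : p = ∏ i, d i)
    (s : ℕ) (b : Fin n → ℕ) (hb : ∀ i, b i < d i) :
    numRep a (s * p + ∑ i, a i * b i) = numRep a (s * p) := by
  have hdpos : ∀ i, 0 < d i := fun i => lt_of_le_of_lt (Nat.zero_le _) (hb i)
  have hdvd : ∀ i j, j ≠ i → d i ∣ a j := by
    intro i j hj
    rw [hd]
    exact Finset.gcd_dvd (Finset.mem_erase.mpr ⟨hj, Finset.mem_univ _⟩)
  have hcop : ∀ i, Nat.Coprime (a i) (d i) := by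
    intro i
    have h1 : (insert i (Finset.univ.erase i)).gcd a
        = GCDMonoid.gcd (a i) ((Finset.univ.erase i).gcd a) := Finset.gcd_insert
    rw [Finset.insert_erase (Finset.mem_univ i), hgcd] at h1
    unfold Nat.Coprime
    rw [hd]
    exact h1.symm
  have hdp : ∀ i, d i ∣ p := by
    intro i; rw [hp]; exact Finset.dvd_prod_of_mem d (Finset.mem_univ i)
  have hle : ∀ y : Fin n → ℕ, (∑ j, a j * y j = s * p + ∑ j, a j * b j) →
      ∀ i, b i ≤ y i := by
    intro y hy i
    haveI : NeZero (d i) := ⟨(hdpos i).ne'⟩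
    have hz : ∀ j, j ≠ i → ((a j : ZMod (d i))) = 0 := fun j hj =>
      (ZMod.natCast_eq_zero_iff _ _).mpr (hdvd i j hj)
    have hp0 : ((p : ℕ) : ZMod (d i)) = 0 :=
      (ZMod.natCast_eq_zero_iff _ _).mpr (hdp i)
    have h1 : ((∑ j, a j * y j : ℕ) : ZMod (d i)) =
        ((s * p + ∑ j, a j * b j : ℕ) : ZMod (d i)) := by rw [hy]
    push_cast at h1
    rw [Finset.sum_eq_single i (fun j _ hj => by rw [hz j hj, zero_mul])
        (fun h => absurd (Finset.mem_univ i) h)] at h1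
    rw [Finset.sum_eq_single i (fun j _ hj => by rw [hz j hj, zero_mul])
        (fun h => absurd (Finset.mem_univ i) h)] at h1
    rw [hp0, mul_zero, zero_add] at h1
    have hu : IsUnit ((a i : ZMod (d i))) :=
      (ZMod.isUnit_iff_coprime _ _).mpr (hcop i)
    have h2 : (y i : ZMod (d i)) = (b i : ZMod (d i)) := hu.mul_left_cancel h1
    have h3 : y i % d i = b i % d i := (ZMod.natCast_eq_natCast_iff _ _ _).mp h2
    rw [Nat.mod_eq_of_lt (hb i)] at h3
    exact h3 ▸ Nat.mod_le (y i) (d i)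
  unfold numRep
  apply Nat.card_congr
  exact {
    toFun := fun x => ⟨fun i => x.1 i - b i, by
      have key : ∀ i, a i * (x.1 i - b i) + a i * b i = a i * x.1 i := fun i => by
        rw [← Nat.mul_add, Nat.sub_add_cancel (hle x.1 x.2 i)]
      have h : ∑ i, a i * (x.1 i - b i) + ∑ i, a i * b i
          = s * p + ∑ i, a i * b i := by
        rw [← Finset.sum_add_distrib]
        simp only [key]
        exact x.2
      show ∑ i, a i * (x.1 i - b i) = s * p
      exact Nat.add_right_cancel h⟩
    invFun := fun x => ⟨fun i => x.1 i + b i, by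
      show ∑ i, a i * (x.1 i + b i) = s * p + ∑ i, a i * b i
      simp only [Nat.mul_add, Finset.sum_add_distrib, x.2]⟩
    left_inv := fun x => Subtype.ext (funext fun i => by
      show (x.1 i - b i) + b i = x.1 i
      exact Nat.sub_add_cancel (hle x.1 x.2 i))
    right_inv := fun x => Subtype.ext (funext fun i => by
      show (x.1 i + b i) - b i = x.1 i
      omega)
  }
end

section
/- For each i, let a'_i = a_i / (∏_{j≠i} d_j). Then for every nonnegative integer s, the number of representations of s·p by (a_1,...,a_n) equals the number of representations of s by (a'_1,...,a'_n); that is, f(a; s·p) = f(a'; s). -/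
lemma auxProdDvd {ι : Type} [DecidableEq ι] (s : Finset ι) (f : ι → ℕ) (m : ℕ)
    (hcop : ∀ i ∈ s, ∀ j ∈ s, i ≠ j → Nat.Coprime (f i) (f j))
    (hdvd : ∀ i ∈ s, f i ∣ m) : (∏ i ∈ s, f i) ∣ m := by
  induction s using Finset.induction_on with
  | empty => simp
  | @insert b t hnot ih =>
    rw [Finset.prod_insert hnot]
    have hcb : Nat.Coprime (f b) (∏ i ∈ t, f i) := by
      apply Nat.Coprime.prod_right
      intro i hi
      exact hcop b (Finset.mem_insert_self b t) i (Finset.mem_insert_of_mem hi)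
        (fun h => hnot (h ▸ hi))
    exact Nat.Coprime.mul_dvd_of_dvd_of_dvd hcb (hdvd b (Finset.mem_insert_self b t))
      (ih (fun i hi j hj hij => hcop i (Finset.mem_insert_of_mem hi) j
        (Finset.mem_insert_of_mem hj) hij) (fun i hi => hdvd i (Finset.mem_insert_of_mem hi)))

theorem stmt3 (n : ℕ) (a : Fin n → ℕ) (hpos : ∀ i, 0 < a i)
    (hgcd : Finset.univ.gcd a = 1)
    (d : Fin n → ℕ) (hd : ∀ i, d i = (Finset.univ.erase i).gcd a)
    (p : ℕ) (hp : p = ∏ i, d i)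
    (a' : Fin n → ℕ) (ha' : ∀ i, a' i = a i / ∏ j ∈ Finset.univ.erase i, d j)
    (s : ℕ) :
    numRep a (s * p) = numRep a' s := by
  classical
  by_cases hn : n ≤ 1
  · interval_cases n
    · -- n = 0
      have hp1 : p = 1 := by simp [hp]
      simp [numRep, hp1, Finset.univ_eq_empty]
    · -- n = 1
      have ha0 : a 0 = 1 := by
        have : (Finset.univ : Finset (Fin 1)) = {0} := by decide
        rw [this, Finset.gcd_singleton] at hgcd
        simpa using hgcd
      have hp0 : p = 0 := by
        have h0 : ((Finset.univ : Finset (Fin 1)).erase 0) = ∅ := by decide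
        have : d 0 = 0 := by rw [hd, h0, Finset.gcd_empty]
        rw [hp]; simp [this]
      have ha'0 : a' 0 = 1 := by
        have h0 : ((Finset.univ : Finset (Fin 1)).erase 0) = ∅ := by decide
        rw [ha', h0]; simpa using ha0
      unfold numRep
      apply Nat.card_congr
      refine ⟨fun x => ⟨fun _ => s, by simp [ha'0]⟩, fun y => ⟨fun _ => 0, by simp [hp0]⟩,
        ?_, ?_⟩
      · rintro ⟨x, hx⟩
        ext i
        fin_cases i
        simp [hp0, ha0, Fin.sum_univ_one] at hx
        simp [hx]
      · rintro ⟨y, hy⟩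
        ext i
        fin_cases i
        simp [ha'0, Fin.sum_univ_one] at hy
        simp [hy]
  · push_neg at hn
    have hdpos : ∀ i, 0 < d i := by
      intro i
      obtain ⟨j, hj⟩ := Fintype.exists_ne_of_one_lt_card (by simpa using hn) i
      rcases Nat.eq_zero_or_pos (d i) with h | h
      · exfalso
        rw [hd, Finset.gcd_eq_zero_iff] at h
        exact (hpos j).ne' (h j (Finset.mem_erase.2 ⟨hj, Finset.mem_univ j⟩))
      · exact h
    have hppos : 0 < p := by
      rw [hp]; exact Finset.prod_pos (fun i _ => hdpos i)
    have hda : ∀ i j, i ≠ j → d i ∣ a j := by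
      intro i j hij
      rw [hd]
      exact Finset.gcd_dvd (Finset.mem_erase.2 ⟨hij.symm, Finset.mem_univ j⟩)
    have hcop : ∀ i j, i ≠ j → Nat.Coprime (d i) (d j) := by
      intro i j hij
      have hdg : Nat.gcd (d i) (d j) ∣ Finset.univ.gcd a := by
        apply Finset.dvd_gcd
        intro k _
        by_cases hk : k = i
        · subst hk
          exact (Nat.gcd_dvd_right _ _).trans (hda j k (fun h => hij h.symm))
        · exact (Nat.gcd_dvd_left _ _).trans (hda i k (fun h => hk h.symm))
      rw [hgcd] at hdg
      exact Nat.dvd_one.mp hdg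
    have hcopa : ∀ i, Nat.Coprime (d i) (a i) := by
      intro i
      have hdg : Nat.gcd (d i) (a i) ∣ Finset.univ.gcd a := by
        apply Finset.dvd_gcd
        intro k _
        by_cases hk : k = i
        · exact hk ▸ Nat.gcd_dvd_right _ _
        · exact (Nat.gcd_dvd_left _ _).trans (hda i k (fun h => hk h.symm))
      rw [hgcd] at hdg
      exact Nat.dvd_one.mp hdg
    set Q : Fin n → ℕ := fun i => ∏ j ∈ Finset.univ.erase i, d j with hQ
    have hQdvd : ∀ i, Q i ∣ a i := by
      intro i
      apply auxProdDvd
      · intro j hj k hk hjk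
        exact hcop j k hjk
      · intro j hj
        exact hda j i (Finset.mem_erase.1 hj).1
    have hQd : ∀ i, Q i * d i = p := by
      intro i
      rw [hp, hQ]
      exact Finset.prod_erase_mul _ _ (Finset.mem_univ i)
    have hkey : ∀ i, a i * d i = a' i * p := by
      intro i
      rw [ha', ← hQd i, ← mul_assoc, Nat.div_mul_cancel (hQdvd i)]
    have hsum : ∀ y : Fin n → ℕ, ∑ i, a i * (d i * y i) = p * ∑ i, a' i * y i := by
      intro y
      rw [Finset.mul_sum]
      apply Finset.sum_congr rfl
      intro i _
      rw [← mul_assoc, hkey i]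
      ring
    have hdvdx : ∀ (x : Fin n → ℕ), (∑ i, a i * x i = s * p) → ∀ i, d i ∣ x i := by
      intro x hx i
      have h1 : d i ∣ ∑ j, a j * x j := by
        rw [hx]
        exact Dvd.dvd.mul_left (hp ▸ Finset.dvd_prod_of_mem d (Finset.mem_univ i)) s
      have h2 : d i ∣ ∑ j ∈ Finset.univ.erase i, a j * x j :=
        Finset.dvd_sum (fun j hj => (hda i j (Finset.mem_erase.1 hj).1.symm).mul_right _)
      have hsplit : ∑ j, a j * x j = a i * x i + ∑ j ∈ Finset.univ.erase i, a j * x j :=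
        (Finset.add_sum_erase _ _ (Finset.mem_univ i)).symm
      rw [hsplit] at h1
      have h3 : d i ∣ a i * x i := (Nat.dvd_add_right h2).mp (by rwa [add_comm] at h1)
      exact (Nat.Coprime.dvd_of_dvd_mul_left (hcopa i) h3)
    unfold numRep
    apply Nat.card_congr
    refine ⟨fun x => ⟨fun i => x.1 i / d i, ?_⟩, fun y => ⟨fun i => d i * y.1 i, ?_⟩, ?_, ?_⟩
    · have hdx := hdvdx x.1 x.2
      have : ∑ i, a i * (d i * (x.1 i / d i)) = s * p := by
        calc ∑ i, a i * (d i * (x.1 i / d i)) = ∑ i, a i * x.1 i := by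
              apply Finset.sum_congr rfl
              intro i _
              rw [Nat.mul_div_cancel' (hdx i)]
          _ = s * p := x.2
      rw [hsum] at this
      exact Nat.eq_of_mul_eq_mul_left hppos (by rw [this]; ring)
    · rw [hsum, y.2]; ring
    · rintro ⟨x, hx⟩
      ext i
      exact Nat.mul_div_cancel' (hdvdx x hx i)
    · rintro ⟨y, hy⟩
      ext i
      exact Nat.mul_div_cancel_left _ (hdpos i)
end

section
/- f(a; t) is a quasi-polynomial of period m = lcm(a_1, ..., a_n): there exist polynomials f_0, ..., f_{m-1} with rational coefficients such that f(a; t) = f_i(t) whenever t ≡ i (mod m). Moreover, each constituent polynomial f_i has degree n-1 with leading coefficient 1/((n-1)! · a_1 · ... · a_n). -/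
open Polynomial Finset
open scoped Nat

theorem Finset.exists_sum_natCast_mul_eq_one {ι : Type*} {s : Finset ι} {a : ι → ℕ}
    (h : s.gcd a = 1) : ∃ c : ι → ℤ, ∑ j ∈ s, (a j : ℤ) * c j = 1 := by
  obtain ⟨c, hc⟩ := s.gcd_eq_sum_mul fun j => (a j : ℤ)
  refine ⟨c, hc ▸ ?_⟩
  have habs : (s.gcd fun j => (a j : ℤ)).natAbs = 1 := Nat.dvd_one.mp <|
    h ▸ Finset.dvd_gcd fun j hj => Int.natAbs_dvd_natAbs.mpr (Finset.gcd_dvd hj)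
  have := Int.finsetGcd_nonneg (s := s) (f := fun j => (a j : ℤ))
  omega

theorem Polynomial.degree_sum_eq_and_leadingCoeff {α R : Type*} [Semiring R] {s : Finset α}
    {f : α → R[X]} {d : ℕ} {c : R} (hdeg : ∀ x ∈ s, (f x).natDegree ≤ d)
    (hcoeff : ∀ x ∈ s, (f x).coeff d = c) (hne : (#s : R) * c ≠ 0) :
    (∑ x ∈ s, f x).degree = d ∧ (∑ x ∈ s, f x).leadingCoeff = #s * c := by
  have hcoeff_sum : (∑ x ∈ s, f x).coeff d = #s * c := by
    rw [finsetSum_coeff, sum_congr rfl hcoeff, sum_const, nsmul_eq_mul]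
  have hdeg_sum : (∑ x ∈ s, f x).degree = d := degree_eq_of_le_of_coeff_ne_zero
    (degree_le_of_natDegree_le (natDegree_sum_le_of_forall_le s f hdeg)) (hcoeff_sum ▸ hne)
  exact ⟨hdeg_sum, by rw [leadingCoeff, natDegree_eq_of_degree_eq_some hdeg_sum, hcoeff_sum]⟩

section StarsAndBars

/-- `(X + 1)(X + 2)⋯(X + d) / d!`, i.e. `binom(X + d, d)`. -/
noncomputable def starsBarsPoly (d : ℕ) : ℚ[X] := C (d ! : ℚ)⁻¹ * (ascPochhammer ℚ d).comp (X + 1)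

theorem starsBarsPoly_eval_natCast (d k : ℕ) :
    (starsBarsPoly d).eval (k : ℚ) = (k + d).choose d := by
  rw [starsBarsPoly, eval_mul, eval_C, eval_comp, eval_add, eval_X, eval_one, ← Nat.cast_succ,
    ascPochhammer_nat_eq_natCast_ascFactorial, Nat.ascFactorial_eq_factorial_mul_choose]
  push_cast
  field_simp

theorem starsBarsPoly_eval_intCast_of_neg {d : ℕ} {z : ℤ} (hz : z < 0) (hdz : -(d : ℤ) ≤ z) :
    (starsBarsPoly d).eval (z : ℚ) = 0 := by
  obtain ⟨j, rfl⟩ : ∃ j : ℕ, z = -(j : ℤ) - 1 := ⟨(-z - 1).toNat, by omega⟩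
  rw [starsBarsPoly, eval_mul, eval_comp, eval_add, eval_X, eval_one]
  push_cast
  rw [sub_add_cancel, ascPochhammer_eval_neg_coe_nat_of_lt (by omega), mul_zero]

theorem natDegree_starsBarsPoly (d : ℕ) : (starsBarsPoly d).natDegree = d := by
  rw [starsBarsPoly, natDegree_C_mul (by positivity), natDegree_comp, ascPochhammer_natDegree,
    ← C_1, natDegree_X_add_C, mul_one]

theorem leadingCoeff_starsBarsPoly (d : ℕ) : (starsBarsPoly d).leadingCoeff = (d ! : ℚ)⁻¹ := by
  rw [starsBarsPoly, ← C_1, leadingCoeff_C_mul_of_isUnit (by positivity : (d ! : ℚ)⁻¹ ≠ 0).isUnit,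
    leadingCoeff_comp (by rw [natDegree_X_add_C]; exact one_ne_zero),
    (monic_ascPochhammer ℚ d).leadingCoeff, (monic_X_add_C 1).leadingCoeff, one_pow, mul_one,
    mul_one]

theorem natDegree_starsBarsPoly_comp (d : ℕ) {c : ℚ} (hc : c ≠ 0) (s : ℚ) :
    ((starsBarsPoly d).comp (C c * (X - C s))).natDegree = d := by
  rw [natDegree_comp, natDegree_C_mul hc, natDegree_X_sub_C, natDegree_starsBarsPoly, mul_one]

theorem leadingCoeff_starsBarsPoly_comp (d : ℕ) {c : ℚ} (hc : c ≠ 0) (s : ℚ) :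
    ((starsBarsPoly d).comp (C c * (X - C s))).leadingCoeff = (d ! : ℚ)⁻¹ * c ^ d := by
  have hlin : (C c * (X - C s)).natDegree = 1 := by rw [natDegree_C_mul hc, natDegree_X_sub_C]
  rw [leadingCoeff_comp (by rw [hlin]; exact one_ne_zero), leadingCoeff_starsBarsPoly,
    natDegree_starsBarsPoly, leadingCoeff_mul, leadingCoeff_C, leadingCoeff_X_sub_C, mul_one]

theorem natCard_sum_eq (ι : Type*) [Fintype ι] (k : ℕ) :
    Nat.card {q : ι → ℕ // ∑ j, q j = k} = (Fintype.card ι + k - 1).choose k := by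
  classical
  rw [← Nat.card_congr (Sym.equivNatSumOfFintype ι k), Nat.card_eq_fintype_card,
    Sym.card_sym_eq_choose]

variable {ι : Type*} [Fintype ι] {m s t : ℕ}

theorem finite_mul_sum_add (hm : 0 < m) :
    Finite {q : ι → ℕ // m * ∑ j, q j + s = t} := by
  classical
  refine Set.Finite.subset (Set.finite_Iic fun _ => t) fun q hq j => ?_
  calc q j ≤ ∑ i, q i := single_le_sum (fun _ _ => Nat.zero_le _) (mem_univ j)
    _ ≤ m * ∑ i, q i := Nat.le_mul_of_pos_left _ hm
    _ ≤ t := by rw [← show m * ∑ j, q j + s = t from hq]; exact Nat.le_add_right _ _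

theorem natCard_mul_sum_add_eq_zero (h : ¬ s ≡ t [MOD m]) :
    Nat.card {q : ι → ℕ // m * ∑ j, q j + s = t} = 0 := by
  have : IsEmpty {q : ι → ℕ // m * ∑ j, q j + s = t} := ⟨fun q => h <| by
    rw [← q.2, Nat.ModEq, Nat.mul_add_mod_self_left]⟩
  exact Nat.card_of_isEmpty

theorem natCard_mul_sum_add_eq_eval (hm : 0 < m) (hs : s < Fintype.card ι * m)
    (hst : s ≡ t [MOD m]) :
    (Nat.card {q : ι → ℕ // m * ∑ j, q j + s = t} : ℚ) =
      (starsBarsPoly (Fintype.card ι - 1)).eval (((t : ℚ) - s) / m) := by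
  obtain ⟨k, hk⟩ := Nat.modEq_iff_dvd.mp hst
  have hkQ : ((t : ℚ) - s) / m = k := by
    rw [div_eq_iff (by positivity), mul_comm]; exact_mod_cast hk
  rw [hkQ]
  rcases lt_or_ge k 0 with hneg | hnonneg
  · have : IsEmpty {q : ι → ℕ // m * ∑ j, q j + s = t} := ⟨fun q => by
      have : (0 : ℤ) ≤ m * k := by rw [← hk]; have := q.2; omega
      nlinarith⟩
    have hk_lower : -(Fintype.card ι : ℤ) < k := by
      have : -(Fintype.card ι : ℤ) * m < m * k := by rw [← hk]; linarith
      nlinarith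
    rw [Nat.card_of_isEmpty, Nat.cast_zero, starsBarsPoly_eval_intCast_of_neg hneg (by omega)]
  · lift k to ℕ using hnonneg
    have hcard : Nat.card {q : ι → ℕ // m * ∑ j, q j + s = t} =
        Nat.card {q : ι → ℕ // ∑ j, q j = k} := by
      refine Nat.card_congr (Equiv.subtypeEquivRight fun q => ?_)
      rw [show t = m * k + s by omega, add_left_inj, Nat.mul_right_inj hm.ne']
    have hι : 0 < Fintype.card ι := Nat.pos_of_ne_zero fun h => by simp [h] at hs
    rw [hcard, natCard_sum_eq, Int.cast_natCast, starsBarsPoly_eval_natCast,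
      ← Nat.choose_symm_add]
    congr 2
    omega

end StarsAndBars

section Residues

theorem neZero_div_of_dvd {a m : ℕ} (hm : 0 < m) (h : a ∣ m) : NeZero (m / a) :=
  ⟨(Nat.div_pos (Nat.le_of_dvd hm h) (Nat.pos_of_dvd_of_pos h hm)).ne'⟩

theorem mul_eq_mul_div_add_mul_mod {a m : ℕ} (h : a ∣ m) (x : ℕ) :
    a * x = m * (x / (m / a)) + a * (x % (m / a)) := by
  conv_lhs => rw [← Nat.div_add_mod x (m / a)]
  rw [mul_add, ← mul_assoc, Nat.mul_div_cancel' h]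

theorem natCast_mul_mod_div {a m : ℕ} (h : a ∣ m) (x : ℕ) :
    ((a * (x % (m / a)) : ℕ) : ZMod m) = a * x := by
  rw [← Nat.mul_mod_mul_left, Nat.mul_div_cancel' h, ZMod.natCast_mod, Nat.cast_mul]

variable {ι : Type*} [Fintype ι] {a : ι → ℕ} {m : ℕ}

def residueSum (a : ι → ℕ) (m : ℕ) (r : ∀ j, Fin (m / a j)) : ℕ := ∑ j, a j * r j

theorem residueSum_lt [Nonempty ι] (hpos : ∀ j, 0 < a j) (r : ∀ j, Fin (m / a j)) :
    residueSum a m r < Fintype.card ι * m := by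
  calc residueSum a m r < ∑ _j : ι, m :=
        Finset.sum_lt_sum_of_nonempty univ_nonempty fun j _ =>
          ((Nat.mul_lt_mul_left (hpos j)).mpr (r j).isLt).trans_le (Nat.mul_div_le m (a j))
    _ = Fintype.card ι * m := by rw [sum_const, card_univ, smul_eq_mul]

def repEquivSigma (hm : 0 < m) (hdvd : ∀ j, a j ∣ m) (t : ℕ) :
    {x : ι → ℕ // ∑ j, a j * x j = t} ≃
      Σ r : (∀ j, Fin (m / a j)), {q : ι → ℕ // m * ∑ j, q j + residueSum a m r = t} :=
  haveI := fun j => neZero_div_of_dvd hm (hdvd j)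
  let e : (ι → ℕ) ≃ (∀ j, Fin (m / a j)) × (ι → ℕ) :=
    ((Equiv.piCongrRight fun j => Nat.divModEquiv (m / a j)).trans
      (Equiv.arrowProdEquivProdArrow ι _ _)).trans (Equiv.prodComm _ _)
  (e.subtypeEquiv (q := fun p => m * ∑ j, p.2 j + residueSum a m p.1 = t) fun x => by
    simp [e, residueSum, mul_eq_mul_div_add_mul_mod (hdvd _) (x _), sum_add_distrib, mul_sum]).trans
    (Equiv.subtypeProdEquivSigmaSubtype fun r (q : ι → ℕ) => m * ∑ j, q j + residueSum a m r = t)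

variable [DecidableEq ι]

theorem residueSum_single [∀ j, NeZero (m / a j)] (j : ι) (v : Fin (m / a j)) :
    residueSum a m (Pi.single j v) = a j * v := by
  rw [residueSum, Finset.sum_eq_single j (fun i _ hi => by simp [Pi.single_eq_of_ne hi])
    (by simp), Pi.single_eq_same]

def residueSumHom (hdvd : ∀ j, a j ∣ m) [∀ j, NeZero (m / a j)] :
    (∀ j, Fin (m / a j)) →+ ZMod m where
  toFun r := residueSum a m r
  map_zero' := by simp [residueSum]
  map_add' x y := by
    simp only [residueSum, Nat.cast_sum, ← sum_add_distrib]
    refine sum_congr rfl fun j _ => ?_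
    rw [Pi.add_apply, Fin.val_add, natCast_mul_mod_div (hdvd j)]
    push_cast
    ring

theorem residueSumHom_surjective (hdvd : ∀ j, a j ∣ m) [∀ j, NeZero (m / a j)]
    (hgcd : univ.gcd a = 1) : Function.Surjective (residueSumHom hdvd) := by
  have hgen : ∀ j, (a j : ZMod m) ∈ (residueSumHom hdvd).range := fun j =>
    ⟨Pi.single j (Fin.ofNat _ 1), by
      simp [residueSumHom, residueSum_single, natCast_mul_mod_div (hdvd j)]⟩
  obtain ⟨c, hc⟩ := exists_sum_natCast_mul_eq_one hgcd
  have hone : (1 : ZMod m) ∈ (residueSumHom hdvd).range := by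
    have := congrArg (Int.cast : ℤ → ZMod m) hc
    push_cast at this
    rw [← this]
    exact AddSubgroup.sum_mem _ fun j _ => by
      rw [mul_comm, ← zsmul_eq_mul]; exact AddSubgroup.zsmul_mem _ (hgen j) _
  intro y
  have := AddSubgroup.zsmul_mem _ hone (y.cast : ℤ)
  rwa [zsmul_one, ZMod.intCast_zmod_cast] at this

theorem card_filter_residueSum_mul (hm : 0 < m) (hdvd : ∀ j, a j ∣ m)
    (hgcd : univ.gcd a = 1) (y : ZMod m) :
    #{r | (residueSum a m r : ZMod m) = y} * m = ∏ j, m / a j := by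
  have := fun j => neZero_div_of_dvd hm (hdvd j)
  have : NeZero m := ⟨hm.ne'⟩
  set f := residueSumHom hdvd
  have hfiber (z : ZMod m) : #{r | f r = z} = #{r | f r = y} :=
    AddMonoidHom.card_fiber_eq_of_mem_range f (residueSumHom_surjective hdvd hgcd z)
      (residueSumHom_surjective hdvd hgcd y)
  calc #{r | f r = y} * m = ∑ z : ZMod m, #{r | f r = z} := by
        rw [sum_congr rfl fun z _ => hfiber z, sum_const, card_univ, ZMod.card, smul_eq_mul,
          mul_comm]
    _ = ∏ j, m / a j := by
        rw [← card_eq_sum_card_fiberwise fun r _ => mem_univ (f r), card_univ, Fintype.card_pi]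
        simp

theorem card_filter_residueSum_mul_prod [Nonempty ι] (hm : 0 < m) (hdvd : ∀ j, a j ∣ m)
    (hgcd : univ.gcd a = 1) (y : ZMod m) :
    #{r | (residueSum a m r : ZMod m) = y} * ∏ j, a j = m ^ (Fintype.card ι - 1) := by
  refine Nat.eq_of_mul_eq_mul_right hm ?_
  rw [mul_right_comm, card_filter_residueSum_mul hm hdvd hgcd, ← prod_mul_distrib,
    ← pow_succ, Nat.sub_add_cancel Fintype.card_pos]
  simp [Nat.div_mul_cancel (hdvd _)]

end Residues

section Constituents

variable {ι : Type} [Fintype ι] [DecidableEq ι] {a : ι → ℕ} {m : ℕ}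

theorem numRep_eq_sum_natCard (hm : 0 < m) (hdvd : ∀ j, a j ∣ m) (t : ℕ) :
    numRep a t = ∑ r : (∀ j, Fin (m / a j)),
      Nat.card {q : ι → ℕ // m * ∑ j, q j + residueSum a m r = t} := by
  have := fun s => finite_mul_sum_add (ι := ι) (s := s) (t := t) hm
  rw [numRep, Nat.card_congr (repEquivSigma hm hdvd t), Nat.card_sigma]

noncomputable def numRepConstituent (a : ι → ℕ) (m i : ℕ) : ℚ[X] :=
  ∑ r ∈ {r : ∀ j, Fin (m / a j) | (residueSum a m r : ZMod m) = i},
    (starsBarsPoly (Fintype.card ι - 1)).comp (C (m : ℚ)⁻¹ * (X - C (residueSum a m r : ℚ)))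

theorem eval_numRepConstituent [Nonempty ι] (hm : 0 < m) (hdvd : ∀ j, a j ∣ m) (t : ℕ) :
    (numRepConstituent a m (t % m)).eval (t : ℚ) = numRep a t := by
  have hpos : ∀ j, 0 < a j := fun j => Nat.pos_of_dvd_of_pos (hdvd j) hm
  rw [numRep_eq_sum_natCard hm hdvd, Nat.cast_sum, numRepConstituent, eval_finsetSum, sum_filter]
  refine sum_congr rfl fun r _ => ?_
  split_ifs with h <;> rw [ZMod.natCast_mod, ZMod.natCast_eq_natCast_iff] at h
  · rw [natCard_mul_sum_add_eq_eval hm (residueSum_lt hpos r) h, eval_comp, div_eq_inv_mul]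
    simp
  · rw [natCard_mul_sum_add_eq_zero h, Nat.cast_zero]

theorem degree_numRepConstituent [Nonempty ι] (hm : 0 < m) (hdvd : ∀ j, a j ∣ m)
    (hgcd : univ.gcd a = 1) (i : ℕ) :
    (numRepConstituent a m i).degree = (Fintype.card ι - 1 : ℕ) ∧
      (numRepConstituent a m i).leadingCoeff =
        1 / ((Fintype.card ι - 1)! * ∏ j, (a j : ℚ)) := by
  set d := Fintype.card ι - 1
  have hmQ : (m : ℚ)⁻¹ ≠ 0 := by positivity
  have hcount : (#{r : ∀ j, Fin (m / a j) | (residueSum a m r : ZMod m) = i} : ℚ) *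
      ∏ j, (a j : ℚ) = (m : ℚ) ^ d := by
    exact_mod_cast card_filter_residueSum_mul_prod hm hdvd hgcd i
  have hprod : ∏ j, (a j : ℚ) ≠ 0 :=
    prod_ne_zero_iff.mpr fun j _ => by exact_mod_cast (Nat.pos_of_dvd_of_pos (hdvd j) hm).ne'
  have hlc : (#{r : ∀ j, Fin (m / a j) | (residueSum a m r : ZMod m) = i} : ℚ) *
      ((d ! : ℚ)⁻¹ * (m : ℚ)⁻¹ ^ d) = 1 / (d ! * ∏ j, (a j : ℚ)) := by
    have hcount_ne : (#{r : ∀ j, Fin (m / a j) | (residueSum a m r : ZMod m) = i} : ℚ) ≠ 0 :=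
      left_ne_zero_of_mul (hcount ▸ pow_ne_zero d (by positivity))
    rw [inv_pow, ← hcount]
    field_simp
  rw [← hlc]
  refine degree_sum_eq_and_leadingCoeff (fun r _ => (natDegree_starsBarsPoly_comp d hmQ _).le)
    (fun r _ => ?_) (hlc ▸ one_div_ne_zero (mul_ne_zero (by positivity) hprod))
  rw [← leadingCoeff_starsBarsPoly_comp d hmQ (residueSum a m r : ℚ), leadingCoeff,
    natDegree_starsBarsPoly_comp d hmQ]

end Constituents

theorem stmt9 (n : ℕ) (hn : 1 ≤ n) (a : Fin n → ℕ) (hpos : ∀ i, 0 < a i)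
    (hgcd : Finset.univ.gcd a = 1)
    (m : ℕ) (hm : m = Finset.univ.lcm a) :
    ∃ P : ℕ → Polynomial ℚ,
      (∀ t : ℕ, (numRep a t : ℚ) = (P (t % m)).eval (t : ℚ)) ∧
      ∀ i < m, (P i).degree = (n - 1 : ℕ) ∧
        (P i).leadingCoeff = 1 / ((n - 1).factorial * ∏ j, (a j : ℚ)) := by
  have hdvd : ∀ j, a j ∣ m := fun j => hm ▸ dvd_lcm (mem_univ j)
  have hm0 : 0 < m := Nat.pos_of_ne_zero fun h0 => by
    obtain ⟨j, -, hj⟩ := lcm_eq_zero_iff.mp (hm ▸ h0)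
    exact (hpos j).ne' hj
  have : Nonempty (Fin n) := ⟨⟨0, hn⟩⟩
  refine ⟨numRepConstituent a m, fun t => (eval_numRepConstituent hm0 hdvd t).symm,
    fun i _ => ?_⟩
  simpa using degree_numRepConstituent hm0 hdvd hgcd i
end

section
/- Let a_1, a_2 be coprime positive integers. For every k ≥ 0, the largest nonnegative integer t with exactly k representations t = a_1 x_1 + a_2 x_2 (x_1, x_2 nonnegative integers) is (k+1)·a_1·a_2 - a_1 - a_2. -/
/-- Number of representations of the integer `t` as `a1*x1 + a2*x2` with `x1, x2 : ℕ`. -/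
noncomputable def numRep2 (a1 a2 : ℕ) (t : ℤ) : ℕ :=
  Nat.card {x : ℕ × ℕ // (a1 : ℤ) * x.1 + (a2 : ℤ) * x.2 = t}

lemma exists_rep2 (a1 a2 : ℕ) (h1 : 0 < a1) (h2 : 0 < a2)
    (hcop : Nat.Coprime a1 a2) (s : ℤ)
    (hs : ((a1:ℤ) - 1) * ((a2:ℤ) - 1) ≤ s) :
    ∃ u v : ℕ, (a1:ℤ) * u + (a2:ℤ) * v = s := by
  have ha1 : (0:ℤ) < a1 := by exact_mod_cast h1
  have ha2 : (0:ℤ) < a2 := by exact_mod_cast h2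
  have hco : IsCoprime (a1:ℤ) (a2:ℤ) := by
    rw [Int.isCoprime_iff_gcd_eq_one]; exact_mod_cast hcop
  obtain ⟨c, d, hcd⟩ := hco
  set x1 : ℤ := (c * s) % a2 with hx1
  have hx1nn : 0 ≤ x1 := Int.emod_nonneg _ (by positivity)
  have hx1lt : x1 < a2 := Int.emod_lt_of_pos _ ha2
  have h3 : (a2:ℤ) ∣ c * s - x1 := ⟨c * s / a2, by rw [hx1, Int.emod_def]; ring⟩
  obtain ⟨e, he⟩ := h3
  have hdvd : (a2:ℤ) ∣ s - a1 * x1 :=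
    ⟨s * d + a1 * e, by linear_combination (-s) * hcd + (a1:ℤ) * he⟩
  have hwlb : -(a2:ℤ) < s - a1 * x1 := by
    nlinarith [mul_le_mul_of_nonneg_left (show x1 ≤ (a2:ℤ) - 1 by linarith) ha1.le]
  have hwnn : 0 ≤ s - a1 * x1 := by
    by_contra hneg
    push_neg at hneg
    have h4 : (a2:ℤ) ∣ (a1 * x1 - s) := by
      have h5 := dvd_neg.mpr hdvd
      rwa [neg_sub] at h5
    have := Int.le_of_dvd (by linarith) h4
    linarith
  obtain ⟨f, hf⟩ := hdvd
  have hfnn : 0 ≤ f := by nlinarith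
  refine ⟨x1.toNat, f.toNat, ?_⟩
  rw [Int.toNat_of_nonneg hx1nn, Int.toNat_of_nonneg hfnn]
  linarith [hf]

lemma finite_rep2 (a1 a2 : ℕ) (h1 : 0 < a1) (h2 : 0 < a2) (t : ℤ) :
    {x : ℕ × ℕ | (a1:ℤ) * x.1 + (a2:ℤ) * x.2 = t}.Finite := by
  apply Set.Finite.subset ((Set.finite_Iic t.toNat).prod (Set.finite_Iic t.toNat))
  rintro ⟨x1, x2⟩ hx
  simp only [Set.mem_setOf_eq] at hx
  have ha1 : (1:ℤ) ≤ a1 := by exact_mod_cast h1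
  have ha2 : (1:ℤ) ≤ a2 := by exact_mod_cast h2
  have hx1 : (x1:ℤ) ≤ t := by nlinarith [Int.natCast_nonneg x1, Int.natCast_nonneg x2]
  have hx2 : (x2:ℤ) ≤ t := by nlinarith [Int.natCast_nonneg x1, Int.natCast_nonneg x2]
  have ht : 0 ≤ t := le_trans (Int.natCast_nonneg x1) hx1
  constructor
  · exact Set.mem_Iic.mpr ((Int.le_toNat ht).mpr hx1)
  · exact Set.mem_Iic.mpr ((Int.le_toNat ht).mpr hx2)

lemma count_rep2 (a1 a2 : ℕ) (h1 : 0 < a1) (h2 : 0 < a2)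
    (hcop : Nat.Coprime a1 a2) (k : ℕ) :
    numRep2 a1 a2 (((k : ℤ) + 1) * a1 * a2 - a1 - a2) = k := by
  have ha1 : (0:ℤ) < a1 := by exact_mod_cast h1
  have ha2 : (0:ℤ) < a2 := by exact_mod_cast h2
  set φ : ℕ → ℕ × ℕ := fun j => (a2 * (j + 1) - 1, a1 * (k - j) - 1) with hφ
  have hset : {x : ℕ × ℕ | (a1:ℤ) * x.1 + (a2:ℤ) * x.2 =
      ((k : ℤ) + 1) * a1 * a2 - a1 - a2} = ↑((Finset.range k).image φ) := by
    ext x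
    simp only [Set.mem_setOf_eq, Finset.coe_image, Finset.coe_range, Set.mem_image,
      Set.mem_Iio]
    constructor
    · intro hx
      have hco : IsCoprime (a2:ℤ) (a1:ℤ) := by
        rw [Int.isCoprime_iff_gcd_eq_one, Int.gcd_natCast_natCast]
        exact hcop.symm
      have hd1 : (a2:ℤ) ∣ (a1:ℤ) * ((x.1:ℤ) + 1) :=
        ⟨((k:ℤ) + 1) * a1 - 1 - x.2, by linear_combination hx⟩
      have hd2 : (a2:ℤ) ∣ ((x.1:ℤ) + 1) := hco.dvd_of_dvd_mul_left hd1
      have hd3 : a2 ∣ x.1 + 1 := by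
        have hcast : ((x.1 + 1 : ℕ) : ℤ) = (x.1:ℤ) + 1 := by push_cast; ring
        exact_mod_cast hcast ▸ hd2
      obtain ⟨j, hj⟩ := hd3
      have hj1 : 1 ≤ j := by
        rcases Nat.eq_zero_or_pos j with h | h
        · subst h; omega
        · exact h
      have hjz : (x.1:ℤ) + 1 = (a2:ℤ) * j := by exact_mod_cast congrArg (Nat.cast (R := ℤ)) hj
      have hx2 : (x.2:ℤ) = (a1:ℤ) * ((k:ℤ) + 1 - j) - 1 := by
        have hcc : (a2:ℤ) * x.2 = (a2:ℤ) * ((a1:ℤ) * ((k:ℤ) + 1 - j) - 1) := by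
          linear_combination hx - (a1:ℤ) * hjz
        exact mul_left_cancel₀ (by positivity) hcc
      have hjk : j ≤ k := by
        by_contra hc
        push_neg at hc
        have hge : (k:ℤ) + 1 ≤ (j:ℤ) := by exact_mod_cast hc
        have hnp : (a1:ℤ) * ((k:ℤ) + 1 - j) ≤ 0 :=
          mul_nonpos_of_nonneg_of_nonpos ha1.le (by linarith)
        have : (0:ℤ) ≤ (x.2:ℤ) := Int.natCast_nonneg x.2
        linarith
      have hx2n : x.2 + 1 = a1 * (k + 1 - j) := by
        have hcast : ((x.2:ℤ)) + 1 = ((a1 * (k + 1 - j) : ℕ) : ℤ) := by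
          push_cast [Nat.cast_sub (show j ≤ k + 1 by omega)]
          linarith [hx2]
        exact_mod_cast hcast
      refine ⟨j - 1, by omega, ?_⟩
      have hj2 : j - 1 + 1 = j := by omega
      have hkj : k - (j - 1) = k + 1 - j := by omega
      have hx1' : a2 * j - 1 = x.1 := by rw [← hj]; omega
      have hx2' : a1 * (k + 1 - j) - 1 = x.2 := by rw [← hx2n]; omega
      simp only [hφ, hj2, hkj]
      exact Prod.ext hx1' hx2'
    · rintro ⟨j, hjk, rfl⟩
      have hb1 : 1 ≤ a2 * (j + 1) := Nat.one_le_iff_ne_zero.mpr (by positivity)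
      have hb2 : 1 ≤ a1 * (k - j) := Nat.one_le_iff_ne_zero.mpr
        (Nat.mul_ne_zero h1.ne' (by omega))
      simp only [hφ]
      push_cast [Nat.cast_sub hb1, Nat.cast_sub hb2, Nat.cast_sub hjk.le]
      ring
  have hinj : Set.InjOn φ ↑(Finset.range k) := by
    intro i hi j hj hij
    have h1' : a2 * (i + 1) - 1 = a2 * (j + 1) - 1 := congrArg Prod.fst hij
    have hbi : 1 ≤ a2 * (i + 1) := Nat.one_le_iff_ne_zero.mpr (by positivity)
    have hbj : 1 ≤ a2 * (j + 1) := Nat.one_le_iff_ne_zero.mpr (by positivity)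
    have : a2 * (i + 1) = a2 * (j + 1) := by omega
    have := Nat.eq_of_mul_eq_mul_left h2 this
    omega
  have : numRep2 a1 a2 (((k : ℤ) + 1) * a1 * a2 - a1 - a2) =
      Set.ncard {x : ℕ × ℕ | (a1:ℤ) * x.1 + (a2:ℤ) * x.2 =
        ((k : ℤ) + 1) * a1 * a2 - a1 - a2} := by
    rw [numRep2, ← Nat.card_coe_set_eq]
    rfl
  rw [this, hset, Set.ncard_coe_finset, Finset.card_image_of_injOn hinj,
    Finset.card_range]

theorem stmt16 (a1 a2 : ℕ) (h1 : 0 < a1) (h2 : 0 < a2)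
    (hcop : Nat.Coprime a1 a2) (hgt : 1 < a1 * a2) (k : ℕ) :
    IsGreatest {t : ℤ | numRep2 a1 a2 t = k}
      (((k : ℤ) + 1) * a1 * a2 - a1 - a2) := by
  have ha1 : (0:ℤ) < a1 := by exact_mod_cast h1
  have ha2 : (0:ℤ) < a2 := by exact_mod_cast h2
  constructor
  · exact count_rep2 a1 a2 h1 h2 hcop k
  · intro t ht
    simp only [Set.mem_setOf_eq] at ht
    by_contra hc
    push_neg at hc
    -- t > N_k, so s := t - k*a1*a2 ≥ (a1-1)*(a2-1)
    obtain ⟨u, v, huv⟩ := exists_rep2 a1 a2 h1 h2 hcop (t - (k:ℤ) * a1 * a2)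
      (by nlinarith)
    -- build k+1 distinct representations of t
    have hfin : ({x : ℕ × ℕ | (a1:ℤ) * x.1 + (a2:ℤ) * x.2 = t}).Finite :=
      finite_rep2 a1 a2 h1 h2 t
    have : Finite {x : ℕ × ℕ // (a1:ℤ) * x.1 + (a2:ℤ) * x.2 = t} :=
      hfin.to_subtype
    set g : Fin (k + 1) → {x : ℕ × ℕ // (a1:ℤ) * x.1 + (a2:ℤ) * x.2 = t} :=
      fun j => ⟨(u + j.1 * a2, v + (k - j.1) * a1), by
        have hjle : j.1 ≤ k := Nat.lt_succ_iff.mp j.2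
        push_cast [Nat.cast_sub hjle]
        linear_combination huv⟩ with hg
    have hginj : Function.Injective g := by
      intro i j hij
      have : u + i.1 * a2 = u + j.1 * a2 := congrArg (fun z => z.1.1) hij
      have : i.1 * a2 = j.1 * a2 := by omega
      have := Nat.eq_of_mul_eq_mul_right h2 this
      exact Fin.ext this
    have hle : k + 1 ≤ numRep2 a1 a2 t := by
      have := Nat.card_le_card_of_injective g hginj
      simpa [numRep2, Nat.card_eq_fintype_card] using this
    omega
end

section
/- Let d_1, ..., d_n be pairwise coprime positive integers, a_i = ∏_{j≠i} d_j, p = d_1⋯d_n. Then for every nonnegative integer s, f(a; s·p) = C(s+n-1, n-1), the number of representations of s·p by (a_1,...,a_n) equals the binomial coefficient (s+n-1 choose n-1). -/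
lemma card_sum_eq (n s : ℕ) :
    Nat.card {y : Fin n → ℕ // ∑ i, y i = s} = Nat.multichoose n s := by
  have e1 : {y : Fin n → ℕ // ∑ i, y i = s} ≃
      {f : Fin n →₀ ℕ // f.sum (fun _ v => v) = s} :=
    { toFun := fun y => ⟨Finsupp.equivFunOnFinite.symm y.1, by
        rw [Finsupp.sum_fintype]
        · simpa using y.2
        · intro; rfl⟩
      invFun := fun f => ⟨f.1, by
        have := f.2
        rw [Finsupp.sum_fintype] at this
        · simpa using this
        · intro; rfl⟩
      left_inv := fun y => by ext i; simp
      right_inv := fun f => by ext i; simp }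
  have e2 : {f : Fin n →₀ ℕ // f.sum (fun _ v => v) = s} ≃ Sym (Fin n) s :=
    { toFun := fun f => ⟨f.1.toMultiset, by
        rw [Finsupp.card_toMultiset]; exact f.2⟩
      invFun := fun m => ⟨Multiset.toFinsupp m.1, by
        have : (Multiset.toFinsupp m.1).toMultiset = m.1 := by simp
        have h := congrArg Multiset.card this
        rw [Finsupp.card_toMultiset] at h
        exact h.trans m.2⟩
      left_inv := fun f => by
        ext i; simp
      right_inv := fun m => by
        ext; simp }
  rw [Nat.card_congr (e1.trans e2), Nat.card_eq_fintype_card,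
    Sym.card_sym_eq_multichoose]
  simp

theorem stmt18 (n : ℕ) (hn : 1 ≤ n) (d : Fin n → ℕ) (hpos : ∀ i, 0 < d i)
    (hcop : ∀ i j, i ≠ j → Nat.Coprime (d i) (d j))
    (a : Fin n → ℕ) (ha : ∀ i, a i = ∏ j ∈ Finset.univ.erase i, d j)
    (p : ℕ) (hp : p = ∏ i, d i) (s : ℕ) :
    numRep a (s * p) = (s + n - 1).choose (n - 1) := by
  have hppos : 0 < p := by
    rw [hp]; exact Finset.prod_pos fun i _ => hpos i
  have had : ∀ i, a i * d i = p := by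
    intro i
    rw [ha, hp, mul_comm, Finset.mul_prod_erase _ _ (Finset.mem_univ i)]
  have hcopa : ∀ i, Nat.Coprime (d i) (a i) := by
    intro i
    rw [ha]
    exact Nat.Coprime.prod_right fun j hj =>
      hcop i j (Finset.ne_of_mem_erase hj).symm
  have hdvd : ∀ x : Fin n → ℕ, (∑ i, a i * x i = s * p) → ∀ i, d i ∣ x i := by
    intro x hx i
    have h1 : d i ∣ ∑ j ∈ Finset.univ.erase i, a j * x j := by
      refine Finset.dvd_sum fun j hj => Dvd.dvd.mul_right ?_ _
      rw [ha]
      exact Finset.dvd_prod_of_mem d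
        (Finset.mem_erase.2 ⟨(Finset.ne_of_mem_erase hj).symm, Finset.mem_univ i⟩)
    have h2 : d i ∣ s * p := by
      refine Dvd.dvd.mul_left ?_ _
      rw [hp]; exact Finset.dvd_prod_of_mem d (Finset.mem_univ i)
    have hsum : a i * x i + ∑ j ∈ Finset.univ.erase i, a j * x j = s * p := by
      rw [Finset.add_sum_erase _ (fun j => a j * x j) (Finset.mem_univ i)]; exact hx
    have h3 : d i ∣ a i * x i := by
      have := Nat.dvd_sub h2 h1
      rwa [← hsum, Nat.add_sub_cancel] at this
    exact (Nat.Coprime.dvd_of_dvd_mul_left (hcopa i) h3)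
  have key : {x : Fin n → ℕ // ∑ i, a i * x i = s * p} ≃
      {y : Fin n → ℕ // ∑ i, y i = s} :=
    { toFun := fun x => ⟨fun i => x.1 i / d i, by
        have hx := x.2
        have hy : ∀ i, d i * (x.1 i / d i) = x.1 i := fun i =>
          Nat.mul_div_cancel' (hdvd x.1 hx i) 
        have : p * ∑ i, x.1 i / d i = p * s := by
          rw [Finset.mul_sum]
          calc ∑ i, p * (x.1 i / d i)
              = ∑ i, a i * (d i * (x.1 i / d i)) := by
                refine Finset.sum_congr rfl fun i _ => ?_
                rw [← mul_assoc, had]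
            _ = ∑ i, a i * x.1 i := by
                refine Finset.sum_congr rfl fun i _ => by rw [hy]
            _ = p * s := by rw [hx, mul_comm]
        exact Nat.eq_of_mul_eq_mul_left hppos this⟩
      invFun := fun y => ⟨fun i => d i * y.1 i, by
        calc ∑ i, a i * (d i * y.1 i) = ∑ i, p * y.1 i := by
              refine Finset.sum_congr rfl fun i _ => by rw [← mul_assoc, had]
          _ = s * p := by rw [← Finset.mul_sum, y.2, mul_comm]⟩
      left_inv := fun x => by
        ext i
        exact Nat.mul_div_cancel' (hdvd x.1 x.2 i)
      right_inv := fun y => by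
        ext i
        exact Nat.mul_div_cancel_left _ (hpos i) }
  rw [numRep, Nat.card_congr key, card_sum_eq, Nat.multichoose_eq]
  have h1 : n + s - 1 = s + n - 1 := by omega
  rw [h1, ← Nat.choose_symm (by omega : s ≤ s + n - 1)]
  congr 1
  omega
end

section
/- Let d_1, ..., d_n be pairwise coprime positive integers, a_i = ∏_{j≠i} d_j, p = d_1⋯d_n, σ = a_1 + ... + a_n. If t has at least one representation as a nonnegative integer combination of the a_i, then t = s·p + Σ_i a_i b_i for some s ∈ ℤ≥0 and 0 ≤ b_i < d_i; consequently every value of f on representable integers equals f(s·p) = C(s+n-1, n-1) for some s ≥ 0. -/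
theorem stmt19 (n : ℕ) (hn : 1 ≤ n) (d : Fin n → ℕ) (hpos : ∀ i, 0 < d i)
    (hcop : ∀ i j, i ≠ j → Nat.Coprime (d i) (d j))
    (a : Fin n → ℕ) (ha : ∀ i, a i = ∏ j ∈ Finset.univ.erase i, d j)
    (p : ℕ) (hp : p = ∏ i, d i)
    (t : ℕ) (ht : ∃ x : Fin n → ℕ, ∑ i, a i * x i = t) :
    ∃ (s : ℕ) (b : Fin n → ℕ), (∀ i, b i < d i) ∧
      t = s * p + ∑ i, a i * b i ∧
      numRep a t = (s + n - 1).choose (n - 1) := by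
  obtain ⟨x₀, hx₀⟩ := ht
  have hadp : ∀ i, a i * d i = p := by
    intro i
    rw [ha, hp, Finset.prod_erase_mul _ _ (Finset.mem_univ i)]
  have hppos : 0 < p := by
    rw [hp]; exact Finset.prod_pos fun i _ => hpos i
  have hcopa : ∀ i, Nat.Coprime (a i) (d i) := by
    intro i
    rw [ha]
    exact Nat.Coprime.prod_left fun j hj => hcop j i (Finset.ne_of_mem_erase hj)
  have hdvd : ∀ i j, i ≠ j → d i ∣ a j := by
    intro i j hij
    rw [ha]
    exact Finset.dvd_prod_of_mem _ (Finset.mem_erase.mpr ⟨hij, Finset.mem_univ i⟩)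
  set b : Fin n → ℕ := fun i => x₀ i % d i with hb
  set s : ℕ := ∑ i, x₀ i / d i with hs
  -- decomposition of any representation sum
  have hkey : ∀ x : Fin n → ℕ,
      ∑ i, a i * x i = ∑ i, a i * (x i % d i) + p * ∑ i, x i / d i := by
    intro x
    rw [Finset.mul_sum, ← Finset.sum_add_distrib]
    refine Finset.sum_congr rfl fun i _ => ?_
    rw [← hadp i]
    calc a i * x i = a i * (x i % d i + d i * (x i / d i)) := by
          rw [Nat.mod_add_div]
      _ = a i * (x i % d i) + a i * d i * (x i / d i) := by ring
  have htdecomp : t = ∑ i, a i * b i + p * s := by rw [← hx₀, hkey x₀]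
  -- residues of any representation are determined
  have hmod : ∀ x : Fin n → ℕ, (∑ i, a i * x i = t) → ∀ i, x i % d i = b i := by
    intro x hx i
    have h1 : ∀ z : Fin n → ℕ, (∑ j, a j * z j) ≡ a i * z i [MOD d i] := by
      intro z
      rw [← Finset.add_sum_erase _ _ (Finset.mem_univ i)]
      have h0 : (∑ j ∈ Finset.univ.erase i, a j * z j) ≡ 0 [MOD d i] :=
        (Nat.modEq_zero_iff_dvd).mpr (Finset.dvd_sum fun j hj =>
          Dvd.dvd.mul_right (hdvd i j (Ne.symm (Finset.ne_of_mem_erase hj))) _)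
      calc a i * z i + ∑ j ∈ Finset.univ.erase i, a j * z j
          ≡ a i * z i + 0 [MOD d i] := Nat.ModEq.add_left _ h0
        _ = a i * z i := by ring
    have h2 : a i * x i ≡ a i * x₀ i [MOD d i] := by
      have hxx : (∑ j, a j * x j) = (∑ j, a j * x₀ j) := by rw [hx, hx₀]
      exact (h1 x).symm.trans (hxx ▸ h1 x₀)
    exact Nat.ModEq.cancel_left_of_coprime (hcopa i).symm h2
  clear_value b s
  have hblt : ∀ i, b i < d i := fun i => hb ▸ Nat.mod_lt (x₀ i) (hpos i)
  refine ⟨s, b, hblt, by rw [htdecomp]; ring, ?_⟩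
  -- bijection with tuples summing to s
  have e : {y : Fin n → ℕ // ∑ i, y i = s} ≃ {x : Fin n → ℕ // ∑ i, a i * x i = t} :=
    { toFun := fun y => ⟨fun i => b i + d i * y.1 i, by
        have : ∑ i, a i * (b i + d i * y.1 i)
            = ∑ i, a i * b i + p * ∑ i, y.1 i := by
          rw [Finset.mul_sum, ← Finset.sum_add_distrib]
          refine Finset.sum_congr rfl fun i _ => ?_
          rw [← hadp i]; ring
        rw [this, y.2, ← htdecomp]⟩
      invFun := fun x => ⟨fun i => x.1 i / d i, by
        have h3 := hkey x.1
        rw [x.2] at h3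
        have h4 : ∀ i, x.1 i % d i = b i := hmod x.1 x.2
        simp only [h4] at h3
        have h5 := htdecomp.symm.trans h3
        have h6 := Nat.add_left_cancel h5
        exact (Nat.eq_of_mul_eq_mul_left hppos h6).symm⟩
      left_inv := fun y => by
        ext i
        simp only
        rw [Nat.add_mul_div_left _ _ (hpos i), Nat.div_eq_of_lt (hblt i), zero_add]
      right_inv := fun x => by
        ext i
        simp only
        rw [← hmod x.1 x.2 i, Nat.mod_add_div] }
  have hcard : numRep a t = Nat.card {y : Fin n → ℕ // ∑ i, y i = s} :=
    (Nat.card_congr e).symm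
  rw [hcard, Nat.card_congr (Sym.equivNatSumOfFintype (Fin n) s).symm,
    Nat.card_eq_fintype_card, Sym.card_sym_eq_choose, Fintype.card_fin]
  clear hcard e
  have h8 : n + s - 1 = s + n - 1 := by omega
  have h9 : s + n - 1 - s = n - 1 := by omega
  rw [h8, ← h9, Nat.choose_symm (by omega : s ≤ s + n - 1)]
end
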